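/- arXiv:0707.0286 — 2 statements merged into one kernel-verified Lean document; each statement's English description precedes it below -/
import Mathlib

section
/- Let p be a prime and 0 < r ≤ s integers. Let G be the group presented by generators x, y subject to the relations x^{p^{s+1}} = y^{p^{s+1}} = [x,[x,y]] = [y,[x,y]] = 1, and let K be the subgroup of G generated by x^{p^r}, y^{p^s} and [x,y]. Then the element z = [x,y]^{p^s} lies in D_3(G,K) = {g ∈ G : g − 1 ∈ I(K)I(G) + I(G)^3}, the subgroup [K,K]·G_3 is trivial, and z has order exactly p (so z ≠ 1 and z^p = 1). In particular the inclusion [K,K]·G_3 ⊆ D_3(G,K) is strict. -/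
/-! The commutator `c = [x, y]` commutes with `x` and `y`, hence is central, so `G₃ = 1`; and `K`
is abelian because `[x^{p^r}, y^{p^s}] = c^{p^{r+s}}` and `c^{p^{s+1}} = [x^{p^{s+1}}, y] = 1`.
In `ℤ(G)` one has `[a, b] - 1 = ((a - 1)(b - 1) - (b - 1)(a - 1))(ba)⁻¹`. For `a = x^n`, `b = y`
the first product lies in `I(K)I(G)` once `x^n ∈ K`, and modulo `I(G)³` the second one is
`n(y - 1)(x - 1) ≡ (y^n - 1)(x - 1)`, which lies in `I(K)I(G)` once `y^n ∈ K`. With `n = p^s` this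
puts `z = [x^{p^s}, y]` in `D₃(G, K)`. Finally, sending `x, y` to elementary unitriangular matrices
over `ℤ/p^{s+1}` maps `z` to a nontrivial matrix, so `z ≠ 1`, while `z^p = c^{p^{s+1}} = 1`. -/

open MonoidAlgebra
open scoped commutatorElement

/-- The additive subgroup `I(K)I(G)` of `ℤ(G)` spanned by the elements `(k-1)(g-1)`,
`k ∈ K`, `g ∈ G`. -/
noncomputable def relAugMulKG {G : Type*} [Group G] (K : Subgroup G) :
    Submodule ℤ (MonoidAlgebra ℤ G) :=
  Submodule.span ℤ {x | ∃ k ∈ K, ∃ g : G, x = (of ℤ G k - 1) * (of ℤ G g - 1)}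

/-- The augmentation ideal `I(G)` of `ℤ(G)`, as a `ℤ`-submodule. -/
noncomputable def augmentationSubmodule (G : Type*) [Group G] : Submodule ℤ (MonoidAlgebra ℤ G) :=
  Submodule.span ℤ {x | ∃ g : G, x = of ℤ G g - 1}

/-- The third relative dimension subgroup
`D₃(G,K) = {g ∈ G | g - 1 ∈ I(K)I(G) + I(G)³}` (as a subset of `G`). -/
noncomputable def D3 {G : Type*} [Group G] (K : Subgroup G) : Set G :=
  {g : G | of ℤ G g - 1 ∈ relAugMulKG K + augmentationSubmodule G ^ 3}

/-- The relations `x^{p^{s+1}} = y^{p^{s+1}} = [x,[x,y]] = [y,[x,y]] = 1` on two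
generators `x, y` (given as `FreeGroup.of (0 : Fin 2)`, `FreeGroup.of (1 : Fin 2)`). -/
def exampleRels (p s : ℕ) : Set (FreeGroup (Fin 2)) :=
  {FreeGroup.of (0 : Fin 2) ^ p ^ (s + 1), FreeGroup.of (1 : Fin 2) ^ p ^ (s + 1),
    ⁅FreeGroup.of (0 : Fin 2), ⁅FreeGroup.of (0 : Fin 2), FreeGroup.of (1 : Fin 2)⁆⁆,
    ⁅FreeGroup.of (1 : Fin 2), ⁅FreeGroup.of (0 : Fin 2), FreeGroup.of (1 : Fin 2)⁆⁆}

section CommutatorPowers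

variable {G : Type*} [Group G] {x y : G}

theorem commutatorElement_pow_left (hx : Commute x ⁅x, y⁆) (n : ℕ) :
    ⁅x ^ n, y⁆ = ⁅x, y⁆ ^ n := by
  induction n with
  | zero => simp
  | succ n ih =>
    rw [pow_succ', commutatorElement_mul_left_eq_conj_mul, ih, (hx.pow_right n).eq,
      mul_inv_cancel_right, pow_succ]

theorem commutatorElement_pow_right (hy : Commute y ⁅x, y⁆) (n : ℕ) :
    ⁅x, y ^ n⁆ = ⁅x, y⁆ ^ n := by
  induction n with
  | zero => simp
  | succ n ih =>
    rw [pow_succ, commutatorElement_mul_right_eq_mul_conj, ih, mul_assoc (_ ^ n),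
      (hy.pow_left n).eq, ← mul_assoc, mul_inv_cancel_right, pow_succ]

theorem commutatorElement_pow_pow (hx : Commute x ⁅x, y⁆) (hy : Commute y ⁅x, y⁆) (m n : ℕ) :
    ⁅x ^ m, y ^ n⁆ = ⁅x, y⁆ ^ (m * n) := by
  have hx' : Commute x ⁅x, y ^ n⁆ := by
    rw [commutatorElement_pow_right hy]
    exact hx.pow_right n
  rw [commutatorElement_pow_left hx', commutatorElement_pow_right hy, ← pow_mul, mul_comm]

end CommutatorPowers

namespace Subgroup

variable {G : Type*} [Group G]

theorem commutator_closure_self_eq_bot {S : Set G} (h : ∀ a ∈ S, ∀ b ∈ S, Commute a b) :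
    ⁅closure S, closure S⁆ = ⊥ := by
  rw [commutator_eq_bot_iff_le_centralizer, centralizer_closure, closure_le]
  exact fun a ha => mem_centralizer_iff.2 fun b hb => h b hb a ha

theorem mem_center_of_closure_eq_top {S : Set G} (hS : closure S = ⊤) {c : G}
    (hc : ∀ g ∈ S, Commute g c) : c ∈ center G := by
  rw [← centralizer_univ, ← coe_top, ← hS, centralizer_closure, mem_centralizer_iff]
  exact hc

theorem top_lowerCentralSeries_two_eq_bot {x y : G} (hgen : closure {x, y} = ⊤)
    (hc : ⁅x, y⁆ ∈ center G) : (⊤ : Subgroup G).lowerCentralSeries 2 = ⊥ := by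
  rw [lowerCentralSeries_succ, top_lowerCentralSeries_one,
    commutator_top_right_eq_bot_iff_le_center, _root_.commutator_def,
    ← QuotientGroup.ker_mk' (center G), ← map_eq_bot_iff, map_commutator, ← hgen,
    MonoidHom.map_closure, Set.image_pair]
  have hxy : Commute (QuotientGroup.mk' (center G) x) (QuotientGroup.mk' (center G) y) := by
    rw [← commutatorElement_eq_one_iff_commute, ← map_commutatorElement,
      QuotientGroup.mk'_apply, QuotientGroup.eq_one_iff]
    exact hc
  apply commutator_closure_self_eq_bot
  rintro a (rfl | rfl) b (rfl | rfl)
  exacts [Commute.refl _, hxy, hxy.symm, Commute.refl _]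

end Subgroup

theorem Submodule.mul_mem_span_of_forall_mul_mem {R A : Type*} [CommSemiring R] [Semiring A]
    [Algebra R A] {S : Set A} {a m : A} (h : ∀ s ∈ S, s * a ∈ span R S) (hm : m ∈ span R S) :
    m * a ∈ span R S :=
  (span_le (p := (span R S).comap (LinearMap.mulRight R a))).2 h hm

section GroupRing

variable {G : Type*} [Group G]

theorem of_sub_one_mem_augmentationSubmodule (g : G) :
    of ℤ G g - 1 ∈ augmentationSubmodule G :=
  Submodule.subset_span ⟨g, rfl⟩

theorem of_sub_one_mul_of (h g : G) :
    (of ℤ G h - 1) * of ℤ G g = (of ℤ G (h * g) - 1) - (of ℤ G g - 1) := by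
  rw [map_mul]
  noncomm_ring

theorem mul_of_mem_augmentationSubmodule {m : MonoidAlgebra ℤ G}
    (hm : m ∈ augmentationSubmodule G) (g : G) : m * of ℤ G g ∈ augmentationSubmodule G := by
  refine Submodule.mul_mem_span_of_forall_mul_mem ?_ hm
  rintro _ ⟨h, rfl⟩
  rw [of_sub_one_mul_of]
  exact sub_mem (of_sub_one_mem_augmentationSubmodule _) (of_sub_one_mem_augmentationSubmodule _)

theorem mul_of_mem_augmentationSubmodule_pow_succ {m : MonoidAlgebra ℤ G} {n : ℕ}
    (hm : m ∈ augmentationSubmodule G ^ (n + 1)) (g : G) :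
    m * of ℤ G g ∈ augmentationSubmodule G ^ (n + 1) := by
  rw [pow_succ] at hm ⊢
  refine Submodule.mul_induction_on hm (fun a ha b hb => ?_) fun a b ha hb => ?_
  · rw [mul_assoc]
    exact Submodule.mul_mem_mul ha (mul_of_mem_augmentationSubmodule hb g)
  · rw [add_mul]
    exact add_mem ha hb

theorem of_sub_one_mul_mem_relAugMulKG {K : Subgroup G} {k : G} (hk : k ∈ K) (g : G) :
    (of ℤ G k - 1) * (of ℤ G g - 1) ∈ relAugMulKG K :=
  Submodule.subset_span ⟨k, hk, g, rfl⟩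

theorem mul_of_mem_relAugMulKG {K : Subgroup G} {m : MonoidAlgebra ℤ G}
    (hm : m ∈ relAugMulKG K) (g : G) : m * of ℤ G g ∈ relAugMulKG K := by
  refine Submodule.mul_mem_span_of_forall_mul_mem ?_ hm
  rintro _ ⟨k, hk, h, rfl⟩
  rw [mul_assoc, of_sub_one_mul_of, mul_sub]
  exact sub_mem (of_sub_one_mul_mem_relAugMulKG hk _) (of_sub_one_mul_mem_relAugMulKG hk _)

theorem of_pow_sub_one_sub_nsmul_mem_sq (g : G) (n : ℕ) :
    of ℤ G (g ^ n) - 1 - n • (of ℤ G g - 1) ∈ augmentationSubmodule G ^ 2 := by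
  induction n with
  | zero => simpa only [pow_zero, map_one, sub_self, zero_smul] using zero_mem _
  | succ n ih =>
    have h : of ℤ G (g ^ (n + 1)) - 1 - (n + 1) • (of ℤ G g - 1) =
        (of ℤ G (g ^ n) - 1 - n • (of ℤ G g - 1)) + (of ℤ G (g ^ n) - 1) * (of ℤ G g - 1) := by
      rw [pow_succ, map_mul, succ_nsmul]
      noncomm_ring
    rw [h, pow_two]
    exact add_mem (pow_two (augmentationSubmodule G) ▸ ih) (Submodule.mul_mem_mul
      (of_sub_one_mem_augmentationSubmodule _) (of_sub_one_mem_augmentationSubmodule _))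

theorem of_commutatorElement_sub_one (a b : G) :
    of ℤ G ⁅a, b⁆ - 1 = ((of ℤ G a - 1) * (of ℤ G b - 1) - (of ℤ G b - 1) * (of ℤ G a - 1)) *
      of ℤ G (b * a)⁻¹ := by
  have h : (of ℤ G a - 1) * (of ℤ G b - 1) - (of ℤ G b - 1) * (of ℤ G a - 1) =
      of ℤ G (a * b) - of ℤ G (b * a) := by
    rw [map_mul, map_mul]
    noncomm_ring
  rw [h, sub_mul, ← map_mul, ← map_mul, mul_inv_cancel, map_one, commutatorElement_def,
    mul_inv_rev, ← mul_assoc]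

theorem commutatorElement_pow_mem_D3 {K : Subgroup G} {x y : G} {n : ℕ} (hx : x ^ n ∈ K)
    (hy : y ^ n ∈ K) : ⁅x ^ n, y⁆ ∈ D3 K := by
  set I := augmentationSubmodule G
  set X := of ℤ G x - 1
  set Y := of ℤ G y - 1
  set A := of ℤ G (x ^ n) - 1
  set B := of ℤ G (y ^ n) - 1
  have hI3 : ∀ {u v : MonoidAlgebra ℤ G}, u ∈ I → v ∈ I ^ 2 → u * v ∈ I ^ 3 ∧ v * u ∈ I ^ 3 :=
    fun hu hv =>
      ⟨pow_succ' I 2 ▸ Submodule.mul_mem_mul hu hv, pow_succ I 2 ▸ Submodule.mul_mem_mul hv hu⟩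
  have key : A * Y - Y * A = (A * Y - B * X) + ((B - n • Y) * X - Y * (A - n • X)) := by
    simp only [sub_mul, mul_sub, smul_mul_assoc, mul_smul_comm]
    abel
  have hmem : A * Y - Y * A ∈ relAugMulKG K ⊔ I ^ 3 := by
    rw [key]
    refine add_mem (Submodule.mem_sup_left (sub_mem ?_ ?_))
      (Submodule.mem_sup_right (sub_mem ?_ ?_))
    · exact of_sub_one_mul_mem_relAugMulKG hx y
    · exact of_sub_one_mul_mem_relAugMulKG hy x
    · exact (hI3 (of_sub_one_mem_augmentationSubmodule x) (of_pow_sub_one_sub_nsmul_mem_sq y n)).2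
    · exact (hI3 (of_sub_one_mem_augmentationSubmodule y) (of_pow_sub_one_sub_nsmul_mem_sq x n)).1
  obtain ⟨u, hu, v, hv, huv⟩ := Submodule.mem_sup.1 hmem
  show of ℤ G ⁅x ^ n, y⁆ - 1 ∈ relAugMulKG K + I ^ 3
  rw [of_commutatorElement_sub_one, ← huv, add_mul, Submodule.add_eq_sup]
  exact Submodule.add_mem_sup (mul_of_mem_relAugMulKG hu _)
    (mul_of_mem_augmentationSubmodule_pow_succ hv _)

end GroupRing

/-- Upper unitriangular `3 × 3` matrices `[[1, a, c], [0, 1, b], [0, 0, 1]]` over `R`. -/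
@[ext] structure Heisenberg (R : Type*) where
  a : R
  b : R
  c : R

namespace Heisenberg

variable {R : Type*} [CommRing R]

instance : Mul (Heisenberg R) := ⟨fun u v => ⟨u.a + v.a, u.b + v.b, u.c + v.c + u.a * v.b⟩⟩
instance : One (Heisenberg R) := ⟨⟨0, 0, 0⟩⟩
instance : Inv (Heisenberg R) := ⟨fun u => ⟨-u.a, -u.b, -u.c + u.a * u.b⟩⟩

theorem mul_def (u v : Heisenberg R) : u * v = ⟨u.a + v.a, u.b + v.b, u.c + v.c + u.a * v.b⟩ :=
  rfl

theorem one_def : (1 : Heisenberg R) = ⟨0, 0, 0⟩ := rfl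

theorem inv_def (u : Heisenberg R) : u⁻¹ = ⟨-u.a, -u.b, -u.c + u.a * u.b⟩ := rfl

instance : Group (Heisenberg R) where
  mul_assoc u v w := by ext <;> simp only [mul_def] <;> ring
  one_mul u := by ext <;> simp [mul_def, one_def]
  mul_one u := by ext <;> simp [mul_def, one_def]
  inv_mul_cancel u := by ext <;> simp only [mul_def, inv_def, one_def] <;> ring

theorem pow_eq_of_a_mul_b_eq_zero (u : Heisenberg R) (h : u.a * u.b = 0) (n : ℕ) :
    u ^ n = ⟨n * u.a, n * u.b, n * u.c⟩ := by
  induction n with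
  | zero => simp [one_def]
  | succ n ih =>
    rw [pow_succ, ih, mul_def]
    ext <;> push_cast
    · ring
    · ring
    · linear_combination (n : R) * h

theorem commute_mk_zero_zero (u : Heisenberg R) (γ : R) : Commute u ⟨0, 0, γ⟩ := by
  show u * _ = _ * u
  ext <;> simp only [mul_def] <;> ring

theorem commutatorElement_mk :
    ⁅(⟨1, 0, 0⟩ : Heisenberg R), (⟨0, 1, 0⟩ : Heisenberg R)⁆ = ⟨0, 0, 1⟩ := by
  ext <;> simp only [commutatorElement_def, mul_def, inv_def] <;> ring

end Heisenberg

namespace exampleRels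

variable {p r s : ℕ}

local notation "𝐱" => (PresentedGroup.of 0 : PresentedGroup (exampleRels p s))
local notation "𝐲" => (PresentedGroup.of 1 : PresentedGroup (exampleRels p s))
local notation "𝐊" => Subgroup.closure {𝐱 ^ p ^ r, 𝐲 ^ p ^ s, ⁅𝐱, 𝐲⁆}

theorem of_zero_pow : 𝐱 ^ p ^ (s + 1) = 1 := by
  rw [PresentedGroup.of, ← map_pow]
  exact PresentedGroup.one_of_mem (by simp [exampleRels])

theorem commute_commutatorElement (i : Fin 2) :
    Commute (PresentedGroup.of i : PresentedGroup (exampleRels p s)) ⁅𝐱, 𝐲⁆ := by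
  rw [← commutatorElement_eq_one_iff_commute, PresentedGroup.of, PresentedGroup.of,
    PresentedGroup.of, ← map_commutatorElement, ← map_commutatorElement]
  exact PresentedGroup.one_of_mem (by fin_cases i <;> simp [exampleRels])

theorem commutatorElement_of_zero_pow (n : ℕ) : ⁅𝐱 ^ n, 𝐲⁆ = ⁅𝐱, 𝐲⁆ ^ n :=
  commutatorElement_pow_left (commute_commutatorElement 0) n

theorem commutatorElement_pow_pow_succ : ⁅𝐱, 𝐲⁆ ^ p ^ (s + 1) = 1 := by
  rw [← commutatorElement_of_zero_pow, of_zero_pow, commutatorElement_one_left]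

theorem closure_of_pair : Subgroup.closure {𝐱, 𝐲} = ⊤ := by
  rw [← PresentedGroup.closure_range_of]
  congr 1
  ext g
  simp [Fin.exists_fin_two, eq_comm]

theorem top_lowerCentralSeries_two_eq_bot :
    (⊤ : Subgroup (PresentedGroup (exampleRels p s))).lowerCentralSeries 2 = ⊥ := by
  refine Subgroup.top_lowerCentralSeries_two_eq_bot closure_of_pair
    (Subgroup.mem_center_of_closure_eq_top closure_of_pair ?_)
  rintro g (rfl | rfl)
  exacts [commute_commutatorElement 0, commute_commutatorElement 1]

theorem commute_pow_pow (hr : 0 < r) : Commute (𝐱 ^ p ^ r) (𝐲 ^ p ^ s) := by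
  rw [← commutatorElement_eq_one_iff_commute, commutatorElement_pow_pow
    (commute_commutatorElement 0) (commute_commutatorElement 1), ← pow_add,
    show r + s = (s + 1) + (r - 1) by omega, pow_add, pow_mul, commutatorElement_pow_pow_succ,
    one_pow]

theorem commutator_sup_lowerCentralSeries_eq_bot (hr : 0 < r) :
    ⁅𝐊, 𝐊⁆ ⊔ (⊤ : Subgroup (PresentedGroup (exampleRels p s))).lowerCentralSeries 2 = ⊥ := by
  have hx := (commute_commutatorElement (p := p) (s := s) 0).pow_left (p ^ r)
  have hy := (commute_commutatorElement (p := p) (s := s) 1).pow_left (p ^ s)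
  have hxy := commute_pow_pow (p := p) (s := s) hr
  rw [Subgroup.commutator_closure_self_eq_bot ?_, top_lowerCentralSeries_two_eq_bot, bot_sup_eq]
  rintro a (rfl | rfl | rfl) b (rfl | rfl | rfl)
  exacts [.refl _, hxy, hx, hxy.symm, .refl _, hy, hx.symm, hy.symm, .refl _]

theorem commutatorElement_pow_mem_D3_closure (hrs : r ≤ s) : ⁅𝐱, 𝐲⁆ ^ p ^ s ∈ D3 𝐊 := by
  rw [← commutatorElement_of_zero_pow]
  refine commutatorElement_pow_mem_D3 ?_ (Subgroup.subset_closure (by simp))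
  have h : 𝐱 ^ p ^ s = (𝐱 ^ p ^ r) ^ p ^ (s - r) := by
    rw [← pow_mul, ← pow_add, Nat.add_sub_cancel' hrs]
  exact h ▸ Subgroup.pow_mem _ (Subgroup.subset_closure (by simp)) _

variable (p s) in
def toHeisenberg : PresentedGroup (exampleRels p s) →* Heisenberg (ZMod (p ^ (s + 1))) :=
  PresentedGroup.toGroup (f := ![⟨1, 0, 0⟩, ⟨0, 1, 0⟩]) <| by
    have hpow : ∀ u : Heisenberg (ZMod (p ^ (s + 1))), u.a * u.b = 0 → u ^ p ^ (s + 1) = 1 :=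
      fun u h => by simp [Heisenberg.pow_eq_of_a_mul_b_eq_zero u h, Heisenberg.one_def]
    rintro w (rfl | rfl | rfl | rfl) <;>
      simp only [map_pow, map_commutatorElement, FreeGroup.lift_apply_of, Matrix.cons_val_zero,
        Matrix.cons_val_one, Heisenberg.commutatorElement_mk]
    · exact hpow _ (by simp)
    · exact hpow _ (by simp)
    · exact (Heisenberg.commute_mk_zero_zero _ _).commutator_eq
    · exact (Heisenberg.commute_mk_zero_zero _ _).commutator_eq

theorem commutatorElement_pow_ne_one (hp : 1 < p) : ⁅𝐱, 𝐲⁆ ^ p ^ s ≠ 1 := by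
  intro h
  have h' := congrArg (fun g => (toHeisenberg p s g).c) h
  simp only [map_pow, map_commutatorElement, toHeisenberg, PresentedGroup.toGroup.of,
    Matrix.cons_val_zero, Matrix.cons_val_one, Heisenberg.commutatorElement_mk, map_one] at h'
  rw [Heisenberg.pow_eq_of_a_mul_b_eq_zero _ (by simp), Heisenberg.one_def, mul_one,
    ZMod.natCast_eq_zero_iff, Nat.pow_dvd_pow_iff_le_right hp] at h'
  omega

theorem orderOf_commutatorElement_pow (hp : p.Prime) : orderOf (⁅𝐱, 𝐲⁆ ^ p ^ s) = p := by
  have := Fact.mk hp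
  refine orderOf_eq_prime ?_ (commutatorElement_pow_ne_one hp.one_lt)
  rw [← pow_mul, ← pow_succ, commutatorElement_pow_pow_succ]

end exampleRels

/-- **Example 2.4**: let `p` be a prime, `0 < r ≤ s`, `G = ⟨x,y ∣ x^{p^{s+1}} = y^{p^{s+1}}
= [x,[x,y]] = [y,[x,y]] = 1⟩` and `K = ⟨x^{p^r}, y^{p^s}, [x,y]⟩`.  Then
`z = [x,y]^{p^s}` lies in `D₃(G,K)`, the subgroup `[K,K]·G₃` is trivial, and `z` has
order exactly `p`; in particular the inclusion `[K,K]·G₃ ⊆ D₃(G,K)` is strict. -/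
theorem relative_dim3_counterexample (p : ℕ) (hp : p.Prime) (r s : ℕ)
    (hr : 0 < r) (hrs : r ≤ s) :
    letI G := PresentedGroup (exampleRels p s)
    letI x : G := PresentedGroup.of (0 : Fin 2)
    letI y : G := PresentedGroup.of (1 : Fin 2)
    letI K : Subgroup G := Subgroup.closure {x ^ p ^ r, y ^ p ^ s, ⁅x, y⁆}
    letI z : G := ⁅x, y⁆ ^ p ^ s
    z ∈ D3 K ∧ ⁅K, K⁆ ⊔ (⊤ : Subgroup G).lowerCentralSeries 2 = (⊥ : Subgroup G) ∧ orderOf z = p ∧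
      ¬ ((⁅K, K⁆ ⊔ (⊤ : Subgroup G).lowerCentralSeries 2 : Subgroup G) : Set G) = D3 K := by
  have hz_mem := exampleRels.commutatorElement_pow_mem_D3_closure (p := p) hrs
  have hbot := exampleRels.commutator_sup_lowerCentralSeries_eq_bot (p := p) (s := s) hr
  refine ⟨hz_mem, hbot, exampleRels.orderOf_commutatorElement_pow hp, fun h => ?_⟩
  rw [hbot, Subgroup.coe_bot] at h
  exact exampleRels.commutatorElement_pow_ne_one hp.one_lt (Set.mem_singleton_iff.1 (h ▸ hz_mem))
end

section
/- Let G be a group, H and K subgroups of G, m ≥ 0 an integer and R = ℤ/mℤ. Set V_H^{(m)} = H^m if m is odd, and V_H^{(m)} = H^{2m}·W^m with W = {h ∈ H : h^{m/2} ∈ K·G₂·G^m} if m is even (where W^m is the subgroup generated by m-th powers of elements of W). Let T₁ be the subgroup generated by all commutators [h, k^q] with h, k ∈ H, q ∈ ℤ, h^q ∈ K·G₂·G^m and k^q ∈ K·G₂·G^m, and let T₂ be the subgroup generated by all commutators [h, k] with h ∈ H ∩ K·G₂·G^m, k ∈ H ∩ K·G₂·G^m·G^q for some q ∈ ℤ with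 h^q ∈ H₂. Then the subgroup H₃·V_H^{(m)}·T₁·T₂ is contained in G ∩ (1_R + I_R(K)I_R(H) + I_R²(G)I_R(H)) = {g ∈ G : g−1 ∈ I_R(K)I_R(H) + I_R²(G)I_R(H)}. -/
open MonoidAlgebra
open scoped commutatorElement

/-- The `R`-submodule `I_R(K)·I_R(H)` of `R(G)` spanned by the products `(k-1)(h-1)`,
`k ∈ K`, `h ∈ H`. -/
noncomputable def relAugMulKH (R : Type*) [CommRing R] {G : Type*} [Group G]
    (K H : Subgroup G) : Submodule R (MonoidAlgebra R G) :=
  Submodule.span R {x | ∃ k ∈ K, ∃ h ∈ H, x = (of R G k - 1) * (of R G h - 1)}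

/-- The `R`-submodule `I_R²(G)·I_R(H)` of `R(G)` spanned by the products
`(g-1)(g'-1)(h-1)`, `g, g' ∈ G`, `h ∈ H`. -/
noncomputable def augSqMulH (R : Type*) [CommRing R] {G : Type*} [Group G]
    (H : Subgroup G) : Submodule R (MonoidAlgebra R G) :=
  Submodule.span R
    {x | ∃ g g' : G, ∃ h ∈ H, x = (of R G g - 1) * (of R G g' - 1) * (of R G h - 1)}

/-- The subgroup `G^m` generated by all `m`-th powers. -/
def powSubgroup (G : Type*) [Group G] (m : ℕ) : Subgroup G :=
  Subgroup.closure {x : G | ∃ g : G, x = g ^ m}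

/-- The subgroup `H^m` generated by the `m`-th powers of the elements of `H`. -/
def powInSubgroup {G : Type*} [Group G] (H : Subgroup G) (m : ℕ) : Subgroup G :=
  Subgroup.closure {x : G | ∃ h ∈ H, x = h ^ m}

/-- The subgroup `V_H^{(m)}`: `H^m` if `m` is odd, and `H^{2m}·W^m` with
`W = {h ∈ H | h^{m/2} ∈ K·G₂·G^m}` if `m` is even. -/
def foxVH {G : Type*} [Group G] (H K : Subgroup G) (m : ℕ) : Subgroup G :=
  if Odd m then powInSubgroup H m
  else powInSubgroup H (2 * m) ⊔
    Subgroup.closure {x : G | ∃ h ∈ H,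
      h ^ (m / 2) ∈ K ⊔ commutator G ⊔ powSubgroup G m ∧ x = h ^ m}

/-- The subgroup `T₁`, generated by the commutators `[h, k^q]` with `h, k ∈ H`,
`q ∈ ℤ`, `h^q, k^q ∈ K·G₂·G^m`. -/
def foxT1 {G : Type*} [Group G] (H K : Subgroup G) (m : ℕ) : Subgroup G :=
  Subgroup.closure {x : G | ∃ h ∈ H, ∃ k ∈ H, ∃ q : ℤ,
    h ^ q ∈ K ⊔ commutator G ⊔ powSubgroup G m ∧
    k ^ q ∈ K ⊔ commutator G ⊔ powSubgroup G m ∧ x = ⁅h, k ^ q⁆}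

/-- The subgroup generated by the `q`-th powers, `q ∈ ℤ`. -/
def zpowSubgroup (G : Type*) [Group G] (q : ℤ) : Subgroup G :=
  Subgroup.closure {x : G | ∃ g : G, x = g ^ q}

/-- The subgroup `T₂`, generated by the commutators `[h, k]` with
`h ∈ H ∩ K·G₂·G^m` and `k ∈ H ∩ K·G₂·G^m·G^q` for some `q ∈ ℤ` with `h^q ∈ H₂`. -/
def foxT2 {G : Type*} [Group G] (H K : Subgroup G) (m : ℕ) : Subgroup G :=
  Subgroup.closure {x : G | ∃ h k : G, ∃ q : ℤ,
    h ∈ H ∧ h ∈ K ⊔ commutator G ⊔ powSubgroup G m ∧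
    k ∈ H ∧ k ∈ K ⊔ commutator G ⊔ powSubgroup G m ⊔ zpowSubgroup G q ∧
    h ^ q ∈ ⁅H, H⁆ ∧ x = ⁅h, k⁆}

/-!
Write `M = I_R(K)I_R(H) + I_R²(G)I_R(H)`. Since `M` is a left ideal of `R(G)`, the elements
`g` with `g - 1 ∈ M` form a subgroup, so it suffices to treat generators. For `h ∈ H` the
elements `g` with `(g - 1)(h - 1) ∈ M` also form a subgroup; it contains `K`, `G₂` and `G^m`
(because `g^q - 1 ≡ q(g - 1)` modulo `I_R²(G)` and `m = 0` in `R`), and also `G^q` as soon as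
`h^q ∈ H₂`. The generators are then handled by the identity
`[a, b] - 1 = ((a - 1)(b - 1) - (b - 1)(a - 1)) a⁻¹b⁻¹` and the binomial expansion
`h^n - 1 ≡ n(h - 1) + C(n, 2)(h - 1)²` modulo `I_R(H)³`.
-/

section AugSubmodule

variable {R : Type*} [CommRing R] {G : Type*} [Group G]

variable (R) in
/-- `I_R(H)`, viewed inside `R(G)`. -/
noncomputable def augSubmodule (H : Subgroup G) : Submodule R (MonoidAlgebra R G) :=
  Submodule.span R {x | ∃ h ∈ H, x = of R G h - 1}

variable {H : Subgroup G}

lemma of_sub_one_mem_augSubmodule {h : G} (hh : h ∈ H) : of R G h - 1 ∈ augSubmodule R H :=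
  Submodule.subset_span ⟨h, hh, rfl⟩

lemma augSubmodule_mono {K : Subgroup G} (hHK : H ≤ K) :
    augSubmodule R H ≤ augSubmodule R K :=
  Submodule.span_mono fun _ ⟨h, hh, hx⟩ => ⟨h, hHK hh, hx⟩

lemma of_mul_sub_one (a b : G) :
    of R G (a * b) - 1
      = (of R G a - 1) * (of R G b - 1) + (of R G a - 1) + (of R G b - 1) := by
  rw [map_mul]; noncomm_ring

lemma augSubmodule_mul_self_le : augSubmodule R H * augSubmodule R H ≤ augSubmodule R H := by
  rw [augSubmodule, Submodule.span_mul_span, Submodule.span_le]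
  rintro _ ⟨_, ⟨a, ha, rfl⟩, _, ⟨b, hb, rfl⟩, rfl⟩
  have hab : (of R G a - 1) * (of R G b - 1)
      = (of R G (a * b) - 1) - (of R G a - 1) - (of R G b - 1) := by
    rw [of_mul_sub_one]; abel
  change (of R G a - 1) * (of R G b - 1) ∈ _
  rw [hab]
  exact sub_mem (sub_mem (of_sub_one_mem_augSubmodule (mul_mem ha hb))
    (of_sub_one_mem_augSubmodule ha)) (of_sub_one_mem_augSubmodule hb)

variable (R) in
def subOneMemSubgroup (S : Subgroup G) (P : Submodule R (MonoidAlgebra R G))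
    (hP : augSubmodule R S * P ≤ P) : Subgroup G where
  carrier := {g | g ∈ S ∧ of R G g - 1 ∈ P}
  one_mem' := ⟨S.one_mem, by rw [map_one, sub_self]; exact zero_mem P⟩
  mul_mem' := by
    rintro a b ⟨ha, pa⟩ ⟨hb, pb⟩
    refine ⟨mul_mem ha hb, ?_⟩
    rw [of_mul_sub_one]
    exact add_mem (add_mem (hP (Submodule.mul_mem_mul (of_sub_one_mem_augSubmodule ha) pb)) pa) pb
  inv_mem' := by
    rintro a ⟨ha, pa⟩
    refine ⟨inv_mem ha, ?_⟩
    have key := of_mul_sub_one (R := R) a⁻¹ a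
    rw [inv_mul_cancel, map_one, sub_self] at key
    rw [show of R G a⁻¹ - 1 = -((of R G a⁻¹ - 1) * (of R G a - 1)) - (of R G a - 1) by
      rw [eq_sub_iff_add_eq, eq_neg_iff_add_eq_zero, key]; abel]
    exact sub_mem (neg_mem (hP (Submodule.mul_mem_mul
      (of_sub_one_mem_augSubmodule (inv_mem ha)) pa))) pa

lemma of_commutator_sub_one (a b : G) :
    of R G ⁅a, b⁆ - 1
      = ((of R G a - 1) * (of R G b - 1) - (of R G b - 1) * (of R G a - 1))
          * of R G (a⁻¹ * b⁻¹) := by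
  have hab : a * b * (a⁻¹ * b⁻¹) = ⁅a, b⁆ := by group
  have hba : b * a * (a⁻¹ * b⁻¹) = 1 := by group
  have : (of R G a - 1) * (of R G b - 1) - (of R G b - 1) * (of R G a - 1)
      = of R G a * of R G b - of R G b * of R G a := by noncomm_ring
  rw [this, sub_mul, ← map_mul, ← map_mul, ← map_mul, ← map_mul, hab, hba, map_one]

lemma of_commutator_sub_one_mem {P : Submodule R (MonoidAlgebra R G)}
    (hP : P * augSubmodule R H ≤ P) {a b : G} (ha : a ∈ H) (hb : b ∈ H)
    (hab : (of R G a - 1) * (of R G b - 1) ∈ P) (hba : (of R G b - 1) * (of R G a - 1) ∈ P) :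
    of R G ⁅a, b⁆ - 1 ∈ P := by
  set c := (of R G a - 1) * (of R G b - 1) - (of R G b - 1) * (of R G a - 1)
  have hc : c ∈ P := sub_mem hab hba
  rw [of_commutator_sub_one,
    show c * of R G (a⁻¹ * b⁻¹) = c + c * (of R G (a⁻¹ * b⁻¹) - 1) by noncomm_ring]
  exact add_mem hc (hP (Submodule.mul_mem_mul hc
    (of_sub_one_mem_augSubmodule (mul_mem (inv_mem ha) (inv_mem hb)))))

lemma augSubmodule_mul_sq_le :
    augSubmodule R H * (augSubmodule R H * augSubmodule R H)
      ≤ augSubmodule R H * augSubmodule R H := by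
  rw [← mul_assoc]; exact mul_le_mul' augSubmodule_mul_self_le le_rfl

lemma commutator_le_subOneMemSubgroup (H : Subgroup G) :
    ⁅H, H⁆ ≤ subOneMemSubgroup R H (augSubmodule R H * augSubmodule R H)
      augSubmodule_mul_sq_le := by
  rw [Subgroup.commutator_le]
  intro a ha b hb
  have hab : ⁅a, b⁆ ∈ H := by
    rw [commutatorElement_def]
    exact mul_mem (mul_mem (mul_mem ha hb) (inv_mem ha)) (inv_mem hb)
  refine ⟨hab, ?_⟩
  refine of_commutator_sub_one_mem (by rw [mul_assoc]; exact augSubmodule_mul_sq_le) ha hb ?_ ?_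
  · exact Submodule.mul_mem_mul (of_sub_one_mem_augSubmodule ha) (of_sub_one_mem_augSubmodule hb)
  · exact Submodule.mul_mem_mul (of_sub_one_mem_augSubmodule hb) (of_sub_one_mem_augSubmodule ha)

end AugSubmodule

section Powers

variable {R : Type*} [CommRing R] {G : Type*} [Group G] {H : Subgroup G} {h : G}

lemma of_zpow_sub_one_sub_zsmul_mem (hh : h ∈ H) (q : ℤ) :
    of R G (h ^ q) - 1 - q • (of R G h - 1) ∈ augSubmodule R H * augSubmodule R H := by
  have step : ∀ p : ℤ, of R G (h ^ (p + 1)) - 1 - (p + 1) • (of R G h - 1)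
      = (of R G (h ^ p) - 1 - p • (of R G h - 1)) + (of R G (h ^ p) - 1) * (of R G h - 1) := by
    intro p
    rw [zpow_add_one, of_mul_sub_one, add_smul, one_smul]; abel
  have hmul : ∀ p : ℤ, (of R G (h ^ p) - 1) * (of R G h - 1)
      ∈ augSubmodule R H * augSubmodule R H := fun p =>
    Submodule.mul_mem_mul (of_sub_one_mem_augSubmodule (zpow_mem hh p))
      (of_sub_one_mem_augSubmodule hh)
  induction q using Int.induction_on with
  | zero => simp only [zpow_zero, map_one, sub_self, zero_smul]; exact zero_mem _
  | succ n ih => rw [step]; exact add_mem ih (hmul n)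
  | pred n ih =>
      rw [← sub_add_cancel (-(n : ℤ)) 1, step] at ih
      exact (add_mem_cancel_right (hmul _)).1 ih

lemma of_pow_sub_one_sub_mem (hh : h ∈ H) (n : ℕ) :
    of R G (h ^ n) - 1 - n • (of R G h - 1) - n.choose 2 • ((of R G h - 1) * (of R G h - 1))
      ∈ augSubmodule R H * augSubmodule R H * augSubmodule R H := by
  have hx : of R G h - 1 ∈ augSubmodule R H := of_sub_one_mem_augSubmodule hh
  have hJ : augSubmodule R H * augSubmodule R H * augSubmodule R H * augSubmodule R H
      ≤ augSubmodule R H * augSubmodule R H * augSubmodule R H := by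
    rw [mul_assoc (augSubmodule R H * augSubmodule R H)]
    exact mul_le_mul' le_rfl augSubmodule_mul_self_le
  induction n with
  | zero =>
    simp only [pow_zero, map_one, sub_self, zero_smul, Nat.choose_zero_succ]
    exact zero_mem _
  | succ n ih =>
    have step : of R G (h ^ (n + 1)) - 1 - (n + 1) • (of R G h - 1)
          - (n + 1).choose 2 • ((of R G h - 1) * (of R G h - 1))
        = (of R G (h ^ n) - 1 - n • (of R G h - 1)
            - n.choose 2 • ((of R G h - 1) * (of R G h - 1))) * (of R G h - 1)
          + (of R G (h ^ n) - 1 - n • (of R G h - 1)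
            - n.choose 2 • ((of R G h - 1) * (of R G h - 1)))
          + n.choose 2 • ((of R G h - 1) * (of R G h - 1) * (of R G h - 1)) := by
      rw [pow_succ, of_mul_sub_one, Nat.choose_succ_succ' n 1, Nat.choose_one_right]
      simp only [sub_mul, smul_mul_assoc, add_smul, one_smul]
      abel
    rw [step]
    exact add_mem (add_mem (hJ (Submodule.mul_mem_mul ih hx)) ih)
      (nsmul_mem (Submodule.mul_mem_mul (Submodule.mul_mem_mul hx hx) hx) _)

end Powers

section FoxSubmodule

variable {R : Type*} [CommRing R] {G : Type*} [Group G]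

variable (R) in
noncomputable def foxSubmodule (K H : Subgroup G) : Submodule R (MonoidAlgebra R G) :=
  augSubmodule R K * augSubmodule R H
    ⊔ augSubmodule R (⊤ : Subgroup G) * augSubmodule R ⊤ * augSubmodule R H

lemma relAugMulKH_add_augSqMulH (K H : Subgroup G) :
    relAugMulKH R K H + augSqMulH R H = foxSubmodule R K H := by
  rw [Submodule.add_eq_sup, foxSubmodule, augSubmodule, augSubmodule, augSubmodule,
    Submodule.span_mul_span, Submodule.span_mul_span, Submodule.span_mul_span]
  congr 1 <;> refine congrArg (Submodule.span R) (Set.ext fun x => ?_)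
  · constructor
    · rintro ⟨k, hk, h, hh, rfl⟩
      exact ⟨_, ⟨k, hk, rfl⟩, _, ⟨h, hh, rfl⟩, rfl⟩
    · rintro ⟨_, ⟨k, hk, rfl⟩, _, ⟨h, hh, rfl⟩, rfl⟩
      exact ⟨k, hk, h, hh, rfl⟩
  · constructor
    · rintro ⟨g, g', h, hh, rfl⟩
      exact ⟨_, ⟨_, ⟨g, trivial, rfl⟩, _, ⟨g', trivial, rfl⟩, rfl⟩, _, ⟨h, hh, rfl⟩,
        rfl⟩
    · rintro ⟨_, ⟨_, ⟨g, -, rfl⟩, _, ⟨g', -, rfl⟩, rfl⟩, _, ⟨h, hh, rfl⟩, rfl⟩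
      exact ⟨g, g', h, hh, rfl⟩

variable {K H : Subgroup G}

lemma augSubmodule_top_mul_foxSubmodule_le :
    augSubmodule R ⊤ * foxSubmodule R K H ≤ foxSubmodule R K H := by
  rw [foxSubmodule, Submodule.mul_sup, ← mul_assoc, ← mul_assoc, ← mul_assoc]
  refine sup_le (le_sup_of_le_right ?_) (le_sup_of_le_right ?_)
  · exact mul_le_mul' (mul_le_mul' le_rfl (augSubmodule_mono le_top)) le_rfl
  · exact mul_le_mul' (mul_le_mul' augSubmodule_mul_self_le le_rfl) le_rfl

lemma foxSubmodule_mul_augSubmodule_le :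
    foxSubmodule R K H * augSubmodule R H ≤ foxSubmodule R K H := by
  rw [foxSubmodule, Submodule.sup_mul, mul_assoc, mul_assoc _ (augSubmodule R H)]
  exact sup_le_sup (mul_le_mul' le_rfl augSubmodule_mul_self_le)
    (mul_le_mul' le_rfl augSubmodule_mul_self_le)

lemma augSubmodule_top_mul_sq_le_foxSubmodule :
    augSubmodule R ⊤ * (augSubmodule R H * augSubmodule R H) ≤ foxSubmodule R K H := by
  rw [← mul_assoc]
  exact le_sup_of_le_right (mul_le_mul' (mul_le_mul' le_rfl (augSubmodule_mono le_top)) le_rfl)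

lemma augSubmodule_cube_le_foxSubmodule :
    augSubmodule R H * augSubmodule R H * augSubmodule R H ≤ foxSubmodule R K H := by
  rw [mul_assoc]
  exact (mul_le_mul' (augSubmodule_mono le_top) le_rfl).trans
    augSubmodule_top_mul_sq_le_foxSubmodule

lemma of_pow_sub_one_mem_foxSubmodule {h : G} (hh : h ∈ H) {n : ℕ} (hn : (n : R) = 0)
    (hc : n.choose 2 • ((of R G h - 1) * (of R G h - 1)) ∈ foxSubmodule R K H) :
    of R G (h ^ n) - 1 ∈ foxSubmodule R K H := by
  have h3 := augSubmodule_cube_le_foxSubmodule (K := K) (of_pow_sub_one_sub_mem (R := R) hh n)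
  rwa [← Nat.cast_smul_eq_nsmul R n, hn, zero_smul, sub_zero,
    Submodule.sub_mem_iff_left _ hc] at h3

variable (R K H) in
noncomputable def foxSubgroup : Subgroup G :=
  subOneMemSubgroup R ⊤ (foxSubmodule R K H) augSubmodule_top_mul_foxSubmodule_le

lemma mem_foxSubgroup {g : G} :
    g ∈ foxSubgroup R K H ↔ of R G g - 1 ∈ foxSubmodule R K H :=
  and_iff_right (Subgroup.mem_top g)

variable (R K H) in
noncomputable def leftFactorSubgroup (h : G) : Subgroup G :=
  subOneMemSubgroup R ⊤ ((foxSubmodule R K H).comap (LinearMap.mulRight R (of R G h - 1))) <|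
    Submodule.mul_le.2 fun a ha b hb => by
      simp only [Submodule.mem_comap, LinearMap.mulRight_apply] at hb ⊢
      rw [mul_assoc]
      exact augSubmodule_top_mul_foxSubmodule_le (Submodule.mul_mem_mul ha hb)

lemma mem_leftFactorSubgroup {g h : G} :
    g ∈ leftFactorSubgroup R K H h ↔ (of R G g - 1) * (of R G h - 1) ∈ foxSubmodule R K H :=
  and_iff_right (Subgroup.mem_top g)

end FoxSubmodule

lemma powSubgroup_eq_zpowSubgroup (G : Type*) [Group G] (m : ℕ) :
    powSubgroup G m = zpowSubgroup G m := by
  simp only [powSubgroup, zpowSubgroup, zpow_natCast]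

lemma Nat.choose_two_eq_mul_of_even {m : ℕ} (hm : Even m) : m.choose 2 = (m - 1) * (m / 2) := by
  rw [Nat.choose_two_right, mul_comm m, Nat.mul_div_assoc _ hm.two_dvd]

lemma Nat.choose_two_eq_mul_of_odd {m : ℕ} (hm : Odd m) : m.choose 2 = m * ((m - 1) / 2) := by
  rw [Nat.choose_two_right, Nat.mul_div_assoc _ (Nat.Odd.sub_odd hm odd_one).two_dvd]

section LeftFactor

variable {R : Type*} [CommRing R] {G : Type*} [Group G] {K H : Subgroup G} {h : G}

lemma of_sub_one_mem_of_mem_commutator {g : G} (hg : g ∈ commutator G) :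
    of R G g - 1 ∈ augSubmodule R (⊤ : Subgroup G) * augSubmodule R ⊤ :=
  (commutator_le_subOneMemSubgroup (⊤ : Subgroup G) (by rwa [commutator_def] at hg)).2

lemma zsmul_sub_one_mem_of_zpow_mem_commutator (hh : h ∈ H) {q : ℤ}
    (hq : h ^ q ∈ ⁅H, H⁆) :
    q • (of R G h - 1) ∈ augSubmodule R H * augSubmodule R H := by
  rw [← sub_sub_cancel (of R G (h ^ q) - 1) (q • (of R G h - 1))]
  exact sub_mem (commutator_le_subOneMemSubgroup H hq).2 (of_zpow_sub_one_sub_zsmul_mem hh q)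

lemma zpowSubgroup_le_leftFactorSubgroup (hh : h ∈ H) {q : ℤ}
    (hq : q • (of R G h - 1) ∈ augSubmodule R H * augSubmodule R H) :
    zpowSubgroup G q ≤ leftFactorSubgroup R K H h := by
  rw [zpowSubgroup, Subgroup.closure_le]
  rintro _ ⟨g, rfl⟩
  rw [SetLike.mem_coe, mem_leftFactorSubgroup]
  have hg := Subgroup.mem_top g
  -- `g ^ q - 1 ≡ q (g - 1)` modulo `I_R²(G)`, and `q (h - 1) ∈ I_R²(H)`
  have split : (of R G (g ^ q) - 1) * (of R G h - 1)
      = (of R G (g ^ q) - 1 - q • (of R G g - 1)) * (of R G h - 1)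
        + (of R G g - 1) * (q • (of R G h - 1)) := by
    rw [sub_mul _ (q • _), mul_smul_comm, smul_mul_assoc]; abel
  rw [split]
  exact add_mem
    (Submodule.mem_sup_right (Submodule.mul_mem_mul (of_zpow_sub_one_sub_zsmul_mem hg q)
      (of_sub_one_mem_augSubmodule hh)))
    (augSubmodule_top_mul_sq_le_foxSubmodule
      (Submodule.mul_mem_mul (of_sub_one_mem_augSubmodule hg) hq))

lemma sup_le_leftFactorSubgroup (hh : h ∈ H) {m : ℕ} (hm : (m : R) = 0) :
    K ⊔ commutator G ⊔ powSubgroup G m ≤ leftFactorSubgroup R K H h := by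
  refine sup_le (sup_le (fun k hk => ?_) (fun g hg => ?_)) ?_
  · exact mem_leftFactorSubgroup.2 (Submodule.mem_sup_left (Submodule.mul_mem_mul
      (of_sub_one_mem_augSubmodule hk) (of_sub_one_mem_augSubmodule hh)))
  · exact mem_leftFactorSubgroup.2 (Submodule.mem_sup_right (Submodule.mul_mem_mul
      (of_sub_one_mem_of_mem_commutator hg) (of_sub_one_mem_augSubmodule hh)))
  · rw [powSubgroup_eq_zpowSubgroup]
    refine zpowSubgroup_le_leftFactorSubgroup hh ?_
    rw [natCast_zsmul, ← Nat.cast_smul_eq_nsmul R, hm, zero_smul]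
    exact zero_mem _

lemma zsmul_sub_one_mul_mem_foxSubmodule (hh : h ∈ H) {k : G} (hk : k ∈ H) {q : ℤ}
    (hq : h ^ q ∈ leftFactorSubgroup R K H k) :
    (q • (of R G h - 1)) * (of R G k - 1) ∈ foxSubmodule R K H := by
  rw [← sub_sub_cancel (of R G (h ^ q) - 1) (q • (of R G h - 1)), sub_mul]
  exact sub_mem (mem_leftFactorSubgroup.1 hq) (augSubmodule_cube_le_foxSubmodule
    (Submodule.mul_mem_mul (of_zpow_sub_one_sub_zsmul_mem hh q) (of_sub_one_mem_augSubmodule hk)))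

end LeftFactor

section Generators

variable {R : Type*} [CommRing R] {G : Type*} [Group G] (K H : Subgroup G)

lemma commutator_commutator_le_foxSubgroup : ⁅⁅H, H⁆, H⁆ ≤ foxSubgroup R K H := by
  rw [Subgroup.commutator_le]
  intro c hc h hh
  obtain ⟨hcH, hc⟩ := commutator_le_subOneMemSubgroup (R := R) H hc
  have hh' := of_sub_one_mem_augSubmodule (R := R) hh
  refine mem_foxSubgroup.2 (of_commutator_sub_one_mem foxSubmodule_mul_augSubmodule_le hcH hh ?_ ?_)
  · exact augSubmodule_cube_le_foxSubmodule (Submodule.mul_mem_mul hc hh')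
  · exact augSubmodule_top_mul_sq_le_foxSubmodule
      (Submodule.mul_mem_mul (augSubmodule_mono le_top hh') hc)

lemma foxVH_le_foxSubgroup {m : ℕ} (hm : (m : R) = 0) : foxVH H K m ≤ foxSubgroup R K H := by
  have cast_zero : ∀ {c : ℕ} (x : MonoidAlgebra R G), m ∣ c → c • x = 0 := by
    rintro c x ⟨d, rfl⟩
    rw [← Nat.cast_smul_eq_nsmul R, Nat.cast_mul, hm, zero_mul, zero_smul]
  unfold foxVH
  split_ifs with hodd
  · rw [powInSubgroup, Subgroup.closure_le]
    rintro _ ⟨h, hh, rfl⟩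
    refine mem_foxSubgroup.2 (of_pow_sub_one_mem_foxSubmodule hh hm ?_)
    rw [cast_zero _ ⟨_, Nat.choose_two_eq_mul_of_odd hodd⟩]
    exact zero_mem _
  · have heven := Nat.not_odd_iff_even.1 hodd
    refine sup_le ?_ ?_
    · rw [powInSubgroup, Subgroup.closure_le]
      rintro _ ⟨h, hh, rfl⟩
      refine mem_foxSubgroup.2 (of_pow_sub_one_mem_foxSubmodule hh
        (by rw [Nat.cast_mul, hm, mul_zero]) ?_)
      rw [cast_zero _ ⟨2 * m - 1, by
        rw [Nat.choose_two_eq_mul_of_even (even_two_mul m), Nat.mul_div_cancel_left _ two_pos,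
          mul_comm]⟩]
      exact zero_mem _
    · rw [Subgroup.closure_le]
      rintro _ ⟨h, hh, hW, rfl⟩
      refine mem_foxSubgroup.2 (of_pow_sub_one_mem_foxSubmodule hh hm ?_)
      have hW' : h ^ ((m / 2 : ℕ) : ℤ) ∈ leftFactorSubgroup R K H h := by
        rw [zpow_natCast]; exact sup_le_leftFactorSubgroup hh hm hW
      rw [Nat.choose_two_eq_mul_of_even heven, mul_smul, ← smul_mul_assoc]
      refine nsmul_mem ?_ _
      rw [← natCast_zsmul]
      exact zsmul_sub_one_mul_mem_foxSubmodule hh hh hW'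

lemma foxT1_le_foxSubgroup {m : ℕ} (hm : (m : R) = 0) : foxT1 H K m ≤ foxSubgroup R K H := by
  rw [foxT1, Subgroup.closure_le]
  rintro _ ⟨h, hh, k, hk, q, hhq, hkq, rfl⟩
  refine mem_foxSubgroup.2 (of_commutator_sub_one_mem foxSubmodule_mul_augSubmodule_le hh
    (zpow_mem hk q) ?_ (mem_leftFactorSubgroup.1 (sup_le_leftFactorSubgroup hh hm hkq)))
  have split : (of R G h - 1) * (of R G (k ^ q) - 1)
      = (q • (of R G h - 1)) * (of R G k - 1)
        + (of R G h - 1) * (of R G (k ^ q) - 1 - q • (of R G k - 1)) := by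
    rw [mul_sub _ _ (q • _), smul_mul_assoc, mul_smul_comm]; abel
  rw [split]
  exact add_mem (zsmul_sub_one_mul_mem_foxSubmodule hh hk (sup_le_leftFactorSubgroup hk hm hhq))
    (augSubmodule_top_mul_sq_le_foxSubmodule (Submodule.mul_mem_mul
      (augSubmodule_mono le_top (of_sub_one_mem_augSubmodule hh))
      (of_zpow_sub_one_sub_zsmul_mem hk q)))

lemma foxT2_le_foxSubgroup {m : ℕ} (hm : (m : R) = 0) : foxT2 H K m ≤ foxSubgroup R K H := by
  rw [foxT2, Subgroup.closure_le]
  rintro _ ⟨h, k, q, hh, hhL, hk, hkL, hq, rfl⟩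
  have hkh : k ∈ leftFactorSubgroup R K H h :=
    sup_le (sup_le_leftFactorSubgroup hh hm)
      (zpowSubgroup_le_leftFactorSubgroup hh (zsmul_sub_one_mem_of_zpow_mem_commutator hh hq)) hkL
  exact mem_foxSubgroup.2 (of_commutator_sub_one_mem foxSubmodule_mul_augSubmodule_le hh hk
    (mem_leftFactorSubgroup.1 (sup_le_leftFactorSubgroup hk hm hhL))
    (mem_leftFactorSubgroup.1 hkh))

end Generators

/-- **Remark 3.4(1)**: the subgroup `H₃·V_H^{(m)}·T₁·T₂` is contained in
`G ∩ (1_R + I_R(K)I_R(H) + I_R²(G)I_R(H))`, where `R = ℤ/mℤ`. -/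
theorem fox_subgroup_lower_bound {G : Type*} [Group G] (H K : Subgroup G) (m : ℕ) :
    ∀ g ∈ (⁅(⁅H, H⁆ : Subgroup G), H⁆ ⊔ foxVH H K m ⊔ foxT1 H K m ⊔ foxT2 H K m :
        Subgroup G),
      of (ZMod m) G g - 1 ∈ relAugMulKH (ZMod m) K H + augSqMulH (ZMod m) H := by
  have hm : ((m : ℕ) : ZMod m) = 0 := ZMod.natCast_self m
  have hle : ⁅(⁅H, H⁆ : Subgroup G), H⁆ ⊔ foxVH H K m ⊔ foxT1 H K m ⊔ foxT2 H K m
      ≤ foxSubgroup (ZMod m) K H :=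
    sup_le (sup_le (sup_le (commutator_commutator_le_foxSubgroup K H)
      (foxVH_le_foxSubgroup K H hm)) (foxT1_le_foxSubgroup K H hm)) (foxT2_le_foxSubgroup K H hm)
  intro g hg
  rw [relAugMulKH_add_augSqMulH]
  exact mem_foxSubgroup.1 (hle hg)
end
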